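/- arXiv:1301.3962 — 4 statements merged into one kernel-verified Lean document; each statement's English description precedes it below -/
import Mathlib

section
/- In Y_R(so_3), the RTT relation is equivalent to the relations [t_{pq}(u), t'_{rs}(v)] = (1/(u-v-1/2))(t'_{r,-p}(v)t_{-s,q}(u) - t_{p,-r}(u)t'_{-q,s}(v)) + (1/(u-v))(δ_{qr} Σ_{i=-1}^{1} t_{pi}(u)t'_{is}(v) - δ_{ps} Σ_{i=-1}^{1} t'_{ri}(v)t_{iq}(u)), where t'_{ij}(u) are the entries of T(u)^{-1}. -/
/-!
Fix `p, q` and collect the differences LHS − RHS of the RTT relations indexed by `(p, q, k, l)`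
into a matrix `E` indexed by `(k, l)`, and those of the mixed relations indexed by `(p, q, r, s)`
into a matrix `F` indexed by `(r, s)`, where `Y = T(v)` and `Y' = T(v)⁻¹`. Every term of `E`
is a central scalar times either `A * Y - Y * B` or a rank-one matrix with a factor `Y` on one
side, so conjugating by `Y'` strips off `Y`, and one finds `Y' * E * Y' = -F`. As `Y'` is
invertible, `E = 0 ↔ F = 0`. The inverse is only assumed for the series in `u`; it transfers
to `v` because both embeddings `su` and `sv` factor through `A⟦X⟧` by injective ring maps.
-/

noncomputable section

/-- Two-variable formal series ring: Laurent-type series in `u⁻¹` (outer) over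
Laurent-type series in `v⁻¹` (inner) with coefficients in `A`.  In this ring both
variables `u`, `v` and differences such as `u - v`, `u - v - 1/2` make sense. -/
abbrev KK (A : Type) [Ring A] : Type := HahnSeries ℤ (HahnSeries ℤ A)

variable {A : Type} [Ring A]

/-- embed a series `a(u) = ∑_{n≥0} a_n u^{-n}` (u = outer variable) -/
def su (a : ℕ → A) : KK A :=
  HahnSeries.ofPowerSeries ℤ (HahnSeries ℤ A) (PowerSeries.mk (fun n => HahnSeries.C (a n)))

/-- embed a series `a(v) = ∑_{n≥0} a_n v^{-n}` (v = inner variable) -/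
def sv (a : ℕ → A) : KK A :=
  HahnSeries.C (HahnSeries.ofPowerSeries ℤ A (PowerSeries.mk a))

/-- the variable `u` -/
def Uu : KK A := HahnSeries.single (-1 : ℤ) 1
/-- the variable `v` -/
def Vv : KK A := HahnSeries.C (HahnSeries.single (-1 : ℤ) 1)

/-- constants -/
def cA (a : A) : KK A := HahnSeries.C (HahnSeries.C a)

/-- coefficients of the shifted series `a(u+c)`, using
`(u+c)^{-r} = ∑_{j≥0} (-1)^j C(r-1+j,j) c^j u^{-r-j}`. -/
def shPow [Algebra ℚ A] (c : ℚ) (a : ℕ → A) : ℕ → A :=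
  fun m => ∑ r ∈ Finset.range (m + 1),
    (algebraMap ℚ A ((-c) ^ (m - r) * ((m - 1).choose (m - r) : ℚ))) * a r

/-- the central scalar 1/2 = κ -/
def half [Algebra ℚ A] : KK A := cA (algebraMap ℚ A (1/2))

/-- Kronecker delta in `KK A` -/
def kd {ι : Type} [DecidableEq ι] (i j : ι) : KK A := if i = j then 1 else 0

open Matrix

theorem HahnSeries.commute_single {Γ R : Type*} [AddCommGroup Γ] [PartialOrder Γ]
    [IsOrderedCancelAddMonoid Γ] [Ring R] (g : Γ) {r : R} (hr : ∀ y, Commute r y)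
    (x : HahnSeries Γ R) : Commute (HahnSeries.single g r) x := by
  ext n
  obtain ⟨a, rfl⟩ : ∃ a, n = a + g := ⟨n - g, (sub_add_cancel n g).symm⟩
  rw [HahnSeries.coeff_single_mul_add, HahnSeries.coeff_mul_single_add, hr]

section RTT

variable {B : Type*} [Ring B] {n : ℕ} (X : Matrix (Fin n) (Fin n) B) (α β : B) (p q : Fin n)

def rttDefect (Y : Matrix (Fin n) (Fin n) B) : Matrix (Fin n) (Fin n) B :=
  scalar _ (α * β) * (scalar _ (X p q) * Y - Y * scalar _ (X p q))
    - scalar _ β * (vecMulVec (Xᵀ q) (Pi.single p 1 ᵥ* Y)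
      - vecMulVec (Y *ᵥ Pi.single q 1) (X p))
    + scalar _ α * (vecMulVec (Pi.single p.rev 1) ((fun m => X m.rev q) ᵥ* Y)
      - vecMulVec (Y *ᵥ fun m => X p m.rev) (Pi.single q.rev 1))

def mixedDefect (Z : Matrix (Fin n) (Fin n) B) : Matrix (Fin n) (Fin n) B :=
  scalar _ (α * β) * (scalar _ (X p q) * Z - Z * scalar _ (X p q))
    - scalar _ α * (vecMulVec (Z *ᵥ Pi.single p.rev 1) (fun s => X s.rev q)
      - vecMulVec (fun r => X p r.rev) (Pi.single q.rev 1 ᵥ* Z))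
    - scalar _ β * (vecMulVec (Pi.single q 1) (X p ᵥ* Z)
      - vecMulVec (Z *ᵥ Xᵀ q) (Pi.single p 1))

theorem rttDefect_apply (Y : Matrix (Fin n) (Fin n) B) (k l : Fin n) :
    rttDefect X α β p q Y k l =
      α * β * (X p q * Y k l - Y k l * X p q)
        - (β * (X k q * Y p l - Y k q * X p l)
          - α * ((1 : Matrix (Fin n) (Fin n) B) k p.rev * ∑ m, X m q * Y m.rev l
            - (1 : Matrix (Fin n) (Fin n) B) l q.rev * ∑ m, Y k m.rev * X p m)) := by
  have hc : ∑ m, X m q * Y m.rev l = ∑ m, X m.rev q * Y m l :=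
    Fintype.sum_equiv Fin.revPerm _ _ fun m => by simp
  have hr : ∑ m, Y k m.rev * X p m = ∑ m, Y k m * X p m.rev :=
    Fintype.sum_equiv Fin.revPerm _ _ fun m => by simp
  simp only [rttDefect, scalar_apply, mul_sub, single_vecMul, one_smul, mulVec_single,
    MulOpposite.op_one, Matrix.add_apply, Matrix.sub_apply, diagonal_mul, mul_diagonal,
    vecMulVec_apply, transpose_apply, row_apply, col_apply, Pi.single_apply, vecMul, dotProduct,
    ite_mul, one_mul, zero_mul, mul_ite, mul_zero, mulVec, mul_one, one_apply, hc, hr]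
  abel

theorem mixedDefect_apply (Z : Matrix (Fin n) (Fin n) B) (r s : Fin n) :
    mixedDefect X α β p q Z r s =
      α * β * (X p q * Z r s - Z r s * X p q)
        - (α * (Z r p.rev * X s.rev q - X p r.rev * Z q.rev s)
          + β * ((1 : Matrix (Fin n) (Fin n) B) q r * ∑ i, X p i * Z i s
            - (1 : Matrix (Fin n) (Fin n) B) p s * ∑ i, Z r i * X i q)) := by
  simp only [mixedDefect, scalar_apply, mul_sub, mulVec_single, MulOpposite.op_one, one_smul,
    single_vecMul, Matrix.sub_apply, diagonal_mul, mul_diagonal, vecMulVec_apply, col_apply,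
    row_apply, Pi.single_apply, eq_comm, vecMul, dotProduct, ite_mul, one_mul, zero_mul, mul_ite,
    mul_zero, mulVec, transpose_apply, mul_one, one_apply]
  abel

variable {X α β} in
theorem conj_rttDefect (hα : ∀ x, Commute α x) (hβ : ∀ x, Commute β x)
    {Y Y' : Matrix (Fin n) (Fin n) B} (hYY' : Y * Y' = 1) (hY'Y : Y' * Y = 1) :
    Y' * rttDefect X α β p q Y * Y' = -mixedDefect X α β p q Y' := by
  have conj_scalar (c : B) (hc : ∀ x, Commute c x) (M : Matrix (Fin n) (Fin n) B) :
      Y' * (scalar _ c * M) * Y' = scalar _ c * (Y' * M * Y') := by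
    rw [(scalar_commute c hc Y').symm.left_comm, Matrix.mul_assoc]
  have conj_mul_left (M : Matrix (Fin n) (Fin n) B) : Y' * (M * Y) * Y' = Y' * M := by
    rw [Matrix.mul_assoc, Matrix.mul_assoc, hYY', Matrix.mul_one]
  have conj_mul_right (M : Matrix (Fin n) (Fin n) B) : Y' * (Y * M) * Y' = M * Y' := by
    rw [← Matrix.mul_assoc, hY'Y, Matrix.one_mul]
  have conj_vecMulVec (u v : Fin n → B) :
      Y' * vecMulVec u v * Y' = vecMulVec (Y' *ᵥ u) (v ᵥ* Y') := by
    rw [mul_vecMulVec, vecMulVec_mul]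
  simp only [rttDefect, mixedDefect, Matrix.mul_sub, Matrix.sub_mul, Matrix.mul_add,
    Matrix.add_mul, conj_scalar _ (fun x => (hα x).mul_left (hβ x)), conj_scalar α hα,
    conj_scalar β hβ,
    conj_mul_left, conj_mul_right, conj_vecMulVec, mulVec_mulVec, vecMul_vecMul,
    hYY', hY'Y, one_mulVec, vecMul_one]
  abel

theorem rttDefect_eq_zero_iff (Y : Matrix (Fin n) (Fin n) B) :
    rttDefect X α β p q Y = 0 ↔ ∀ k l,
      α * β * (X p q * Y k l - Y k l * X p q) =
        β * (X k q * Y p l - Y k q * X p l)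
          - α * ((1 : Matrix (Fin n) (Fin n) B) k p.rev * ∑ m, X m q * Y m.rev l
            - (1 : Matrix (Fin n) (Fin n) B) l q.rev * ∑ m, Y k m.rev * X p m) := by
  simp only [← Matrix.ext_iff, rttDefect_apply, Matrix.zero_apply, sub_eq_zero]

theorem mixedDefect_eq_zero_iff (Z : Matrix (Fin n) (Fin n) B) :
    mixedDefect X α β p q Z = 0 ↔ ∀ r s,
      α * β * (X p q * Z r s - Z r s * X p q) =
        α * (Z r p.rev * X s.rev q - X p r.rev * Z q.rev s)
          + β * ((1 : Matrix (Fin n) (Fin n) B) q r * ∑ i, X p i * Z i s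
            - (1 : Matrix (Fin n) (Fin n) B) p s * ∑ i, Z r i * X i q) := by
  simp only [← Matrix.ext_iff, mixedDefect_apply, Matrix.zero_apply, sub_eq_zero]

theorem rtt_iff_mixed (Y Y' : Matrix (Fin n) (Fin n) B)
    (hα : ∀ x, Commute α x) (hβ : ∀ x, Commute β x)
    (hYY' : Y * Y' = 1) (hY'Y : Y' * Y = 1) :
    (∀ i j k l : Fin n,
      α * β * (X i j * Y k l - Y k l * X i j) =
        β * (X k j * Y i l - Y k j * X i l)
          - α * ((1 : Matrix (Fin n) (Fin n) B) k i.rev * ∑ p, X p j * Y p.rev l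
            - (1 : Matrix (Fin n) (Fin n) B) l j.rev * ∑ p, Y k p.rev * X i p)) ↔
    (∀ p q r s : Fin n,
      α * β * (X p q * Y' r s - Y' r s * X p q) =
        α * (Y' r p.rev * X s.rev q - X p r.rev * Y' q.rev s)
          + β * ((1 : Matrix (Fin n) (Fin n) B) q r * ∑ i, X p i * Y' i s
            - (1 : Matrix (Fin n) (Fin n) B) p s * ∑ i, Y' r i * X i q)) := by
  have hY' : IsUnit Y' := ⟨⟨Y', Y, hY'Y, hYY'⟩, rfl⟩
  refine forall₂_congr fun p q => ?_
  rw [← rttDefect_eq_zero_iff, ← mixedDefect_eq_zero_iff,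
    ← neg_eq_zero (a := mixedDefect X α β p q Y'), ← conj_rttDefect p q hα hβ hYY' hY'Y,
    hY'.mul_left_eq_zero, hY'.mul_right_eq_zero]

end RTT

theorem Matrix.map_mul_eq_one_of_map_mul_eq_one {m R S S' : Type*} [Fintype m]
    [DecidableEq m] [Semiring R] [Semiring S] [Semiring S'] {f : R →+* S}
    (hf : Function.Injective f) (g : R →+* S')
    {M N : Matrix m m R} (h : M.map f * N.map f = 1) : M.map g * N.map g = 1 := by
  have hMN : (M * N).map f = (1 : Matrix m m R).map f := by
    rwa [Matrix.map_mul, Matrix.map_one f f.map_zero f.map_one]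
  rw [← Matrix.map_mul, Matrix.map_injective hf hMN, Matrix.map_one g g.map_zero g.map_one]

theorem sv_mul_eq_one_of_su_mul_eq_one {m : Type} [Fintype m] [DecidableEq m]
    {a b : m → m → ℕ → A}
    (h : ∀ i j, ∑ p, su (a i p) * su (b p j) = kd i j) :
    of (fun i j => sv (a i j)) * of (fun i j => sv (b i j)) = 1 := by
  let f : PowerSeries A →+* KK A :=
    (HahnSeries.ofPowerSeries ℤ (HahnSeries ℤ A)).comp (PowerSeries.map HahnSeries.C)
  let g : PowerSeries A →+* KK A := HahnSeries.C.comp (HahnSeries.ofPowerSeries ℤ A)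
  have hf : Function.Injective f := fun x y hxy =>
    PowerSeries.map_injective _ HahnSeries.C_injective
      (HahnSeries.ofPowerSeries_injective (Γ := ℤ) (R := HahnSeries ℤ A) hxy)
  have hsu (c : m → m → ℕ → A) :
      (of fun i j => PowerSeries.mk (c i j)).map f = of fun i j => su (c i j) := rfl
  have hsv (c : m → m → ℕ → A) :
      (of fun i j => PowerSeries.mk (c i j)).map g = of fun i j => sv (c i j) := rfl
  rw [← hsv, ← hsv]
  refine Matrix.map_mul_eq_one_of_map_mul_eq_one hf g ?_
  rw [hsu, hsu]
  exact Matrix.ext fun i j => by simpa only [mul_apply, of_apply, one_apply, kd] using h i j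

/-- The indices `-1, 0, 1` are encoded as `0, 1, 2 : Fin 3`, negation being `Fin.rev`. -/
theorem stmt3_general (A : Type) [Ring A] [Algebra ℚ A]
    (t t' : Fin 3 → Fin 3 → ℕ → A)
    (hinv₁ : ∀ i j : Fin 3, ∑ p : Fin 3, su (t i p) * su (t' p j) = kd i j)
    (hinv₂ : ∀ i j : Fin 3, ∑ p : Fin 3, su (t' i p) * su (t p j) = kd i j) :
    (∀ i j k l : Fin 3,
      (Uu - Vv) * (Uu - Vv - half) * (su (t i j) * sv (t k l) - sv (t k l) * su (t i j)) =
        (Uu - Vv - half) * (su (t k j) * sv (t i l) - sv (t k j) * su (t i l)) -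
        (Uu - Vv) * (kd k i.rev * ∑ p : Fin 3, su (t p j) * sv (t p.rev l) -
                     kd l j.rev * ∑ p : Fin 3, sv (t k p.rev) * su (t i p))) ↔
    (∀ p q r s : Fin 3,
      (Uu - Vv) * (Uu - Vv - half) * (su (t p q) * sv (t' r s) - sv (t' r s) * su (t p q)) =
        (Uu - Vv) * (sv (t' r p.rev) * su (t s.rev q) - su (t p r.rev) * sv (t' q.rev s)) +
        (Uu - Vv - half) * (kd q r * ∑ i : Fin 3, su (t p i) * sv (t' i s) -
                            kd p s * ∑ i : Fin 3, sv (t' r i) * su (t i q))) := by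
  have hU : ∀ x : KK A, Commute Uu x := HahnSeries.commute_single _ Commute.one_left
  have hV : ∀ x : KK A, Commute Vv x :=
    HahnSeries.commute_single _ (HahnSeries.commute_single _ Commute.one_left)
  have hhalf : ∀ x : KK A, Commute half x :=
    HahnSeries.commute_single _ (HahnSeries.commute_single _ (Algebra.commutes _))
  have hα : ∀ x : KK A, Commute (Uu - Vv) x := fun x => (hU x).sub_left (hV x)
  exact rtt_iff_mixed (of fun i j => su (t i j)) (Uu - Vv) (Uu - Vv - half) _ _ hα
    (fun x => (hα x).sub_left (hhalf x)) (sv_mul_eq_one_of_su_mul_eq_one hinv₁)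
    (sv_mul_eq_one_of_su_mul_eq_one hinv₂)

/-- given that `T'(v) = T(v)⁻¹` (entrywise two-sided inverse), the
entrywise RTT relation is equivalent to the mixed relations
`(u-v)(u-v-1/2)[t_{pq}(u),t'_{rs}(v)] = (u-v)(t'_{r,-p}(v)t_{-s,q}(u) - t_{p,-r}(u)t'_{-q,s}(v))
 + (u-v-1/2)(δ_{qr} ∑_i t_{pi}(u)t'_{is}(v) - δ_{ps} ∑_i t'_{ri}(v)t_{iq}(u))`
(indices `-1,0,1` are encoded as `0,1,2 : Fin 3`, with negation `Fin.rev`). -/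
theorem stmt3 (A : Type) [Ring A] [Algebra ℚ A]
    (t t' : Fin 3 → Fin 3 → ℕ → A)
    (ht0 : ∀ i j, t i j 0 = if i = j then 1 else 0)
    (hinv₁ : ∀ i j : Fin 3, ∑ p : Fin 3, su (t i p) * su (t' p j) = kd i j)
    (hinv₂ : ∀ i j : Fin 3, ∑ p : Fin 3, su (t' i p) * su (t p j) = kd i j) :
    (∀ i j k l : Fin 3,
      (Uu - Vv) * (Uu - Vv - half) * (su (t i j) * sv (t k l) - sv (t k l) * su (t i j)) =
        (Uu - Vv - half) * (su (t k j) * sv (t i l) - sv (t k j) * su (t i l)) -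
        (Uu - Vv) * (kd k i.rev * ∑ p : Fin 3, su (t p j) * sv (t p.rev l) -
                     kd l j.rev * ∑ p : Fin 3, sv (t k p.rev) * su (t i p))) ↔
    (∀ p q r s : Fin 3,
      (Uu - Vv) * (Uu - Vv - half) * (su (t p q) * sv (t' r s) - sv (t' r s) * su (t p q)) =
        (Uu - Vv) * (sv (t' r p.rev) * su (t s.rev q) - su (t p r.rev) * sv (t' q.rev s)) +
        (Uu - Vv - half) * (kd q r * ∑ i : Fin 3, su (t p i) * sv (t' i s) -
                            kd p s * ∑ i : Fin 3, sv (t' r i) * su (t i q))) :=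
  stmt3_general A t t' hinv₁ hinv₂
end
end

section
/- In Y_R(so_3), the unitarity relation T(u)T^t(u+1/2) = 1 implies, in terms of the Gauss generators, that k₁(u)^{-1} = k_{-1}(u+1/2), that -e_{01}(u)k₁(u)^{-1} = k_{-1}(u+1/2)e_{-1,0}(u+1/2), that -k₁(u)^{-1}f_{10}(u) = f_{0,-1}(u+1/2)k_{-1}(u+1/2), and that k₀(u)^{-1} + e_{01}(u)k₁(u)^{-1}f_{10}(u) = k₀(u+1/2) + f_{0,-1}(u+1/2)k_{-1}(u+1/2)e_{-1,0}(u+1/2). -/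
/-!
Unitarity says that `Tᵗ(u + 1/2)` is a left inverse of `T(u) = F K E`, hence equals
`E⁻¹ K⁻¹ F⁻¹`, whose lower-right `2 × 2` block is computed directly. The entries of that block are
`t₀₀, t₋₁,₀, t₀,₋₁, t₋₁,₋₁` evaluated at `u + 1/2`. The shift `u ↦ u + 1/2` is a ring endomorphism
of `A⟦u⁻¹⟧`: it substitutes `x ↦ x / (1 + x/2)` in `x = u⁻¹`, a series with central (rational)
coefficients, so it carries the Gauss factorisations `t₋₁,₋₁ = k₋₁`, `t₋₁,₀ = k₋₁ e₋₁,₀`, ...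
of these entries to the same factorisations at `u + 1/2`.
-/

noncomputable section

variable {A : Type} [Ring A]

variable (A) in
/-- The RTT Yangian `Y_R(so₃)`: the indices `-1, 0, 1` are encoded as `0, 1, 2 : Fin 3`,
so that the index `-i` corresponds to `Fin.rev`.  The data consists of the matrix
generator coefficients `t i j r` (with `t_{ij}(u) = ∑_r t_{ij}^{(r)} u^{-r}`,
`t_{ij}^{(0)} = δ_{ij}`) subject to the entrywise RTT relation (with denominators
`u-v`, `u-v-1/2` cleared) and the unitarity relation `T(u)Tᵗ(u+1/2) = Tᵗ(u+1/2)T(u) = 1`,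
together with the Gauss generators `e`, `f`, `k` (and the inverses of the `k`'s)
defined by the unique Gauss decomposition `T(u) = F(u)K(u)E(u)`. -/
structure YRso3 (A : Type) [Ring A] [Algebra ℚ A] where
  t : Fin 3 → Fin 3 → ℕ → A
  t_zero : ∀ i j, t i j 0 = if i = j then 1 else 0
  /-- `(u-v)(u-v-1/2)[t_{ij}(u),t_{kl}(v)] = (u-v-1/2)(t_{kj}(u)t_{il}(v)-t_{kj}(v)t_{il}(u))
      - (u-v)(δ_{k,-i} ∑_p t_{pj}(u)t_{-p,l}(v) - δ_{l,-j} ∑_p t_{k,-p}(v)t_{ip}(u))` -/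
  rtt : ∀ i j k l : Fin 3,
    (Uu - Vv) * (Uu - Vv - half) * (su (t i j) * sv (t k l) - sv (t k l) * su (t i j)) =
      (Uu - Vv - half) * (su (t k j) * sv (t i l) - sv (t k j) * su (t i l)) -
      (Uu - Vv) * (kd k i.rev * ∑ p : Fin 3, su (t p j) * sv (t p.rev l) -
                   kd l j.rev * ∑ p : Fin 3, sv (t k p.rev) * su (t i p))
  /-- `T(u)Tᵗ(u+1/2) = 1` -/
  unitary₁ : ∀ i j : Fin 3,
    ∑ p : Fin 3, su (t i p) * su (shPow (1/2) (t j.rev p.rev)) = kd i j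
  /-- `Tᵗ(u+1/2)T(u) = 1` -/
  unitary₂ : ∀ i j : Fin 3,
    ∑ p : Fin 3, su (shPow (1/2) (t p.rev i.rev)) * su (t p j) = kd i j
  -- Gauss generators: e₋₁,₀ e₀₁ e₋₁,₁ f₀,₋₁ f₁₀ f₁,₋₁ k₋₁ k₀ k₁ and the inverses k⁻¹
  e10 : ℕ → A
  e01 : ℕ → A
  e11 : ℕ → A
  f01 : ℕ → A
  f10 : ℕ → A
  f11 : ℕ → A
  km1 : ℕ → A
  k0 : ℕ → A
  k1 : ℕ → A
  km1' : ℕ → A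
  k0' : ℕ → A
  k1' : ℕ → A
  e10_zero : e10 0 = 0
  e01_zero : e01 0 = 0
  e11_zero : e11 0 = 0
  f01_zero : f01 0 = 0
  f10_zero : f10 0 = 0
  f11_zero : f11 0 = 0
  km1_zero : km1 0 = 1
  k0_zero : k0 0 = 1
  k1_zero : k1 0 = 1
  -- the Gauss decomposition T(u) = F(u)K(u)E(u), entrywise
  g11 : su (t 0 0) = su km1
  g12 : su (t 0 1) = su km1 * su e10
  g13 : su (t 0 2) = su km1 * su e11
  g21 : su (t 1 0) = su f01 * su km1
  g22 : su (t 1 1) = su k0 + su f01 * su km1 * su e10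
  g23 : su (t 1 2) = su k0 * su e01 + su f01 * su km1 * su e11
  g31 : su (t 2 0) = su f11 * su km1
  g32 : su (t 2 1) = su f10 * su k0 + su f11 * su km1 * su e10
  g33 : su (t 2 2) = su k1 + su f10 * su k0 * su e01 + su f11 * su km1 * su e11
  -- the inverses of the diagonal Gauss generators
  km1_inv₁ : su km1 * su km1' = 1
  km1_inv₂ : su km1' * su km1 = 1
  k0_inv₁ : su k0 * su k0' = 1
  k0_inv₂ : su k0' * su k0 = 1
  k1_inv₁ : su k1 * su k1' = 1
  k1_inv₂ : su k1' * su k1 = 1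

namespace PowerSeries

section ScalarSubst

open Finset

variable {R M : Type*} [CommSemiring R] [Semiring M] [Algebra R M] {g : R⟦X⟧}

theorem coeff_pow_eq_zero_of_lt (hg : X ∣ g) {m r : ℕ} (h : m < r) : coeff m (g ^ r) = 0 :=
  X_pow_dvd_iff.mp (pow_dvd_pow_of_dvd hg r) m h

theorem sum_coeff_pow_smul_eq_of_le (hg : X ∣ g) (a : ℕ → M) {k : ℕ} (m : ℕ) (hk : k ≤ m) :
    ∑ r ∈ range (k + 1), coeff k (g ^ r) • a r = ∑ r ∈ range (m + 1), coeff k (g ^ r) • a r :=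
  sum_subset (range_subset_range.mpr (by omega)) fun r hr hr' => by
    rw [coeff_pow_eq_zero_of_lt hg (by simp_all), zero_smul]

variable (g) in
def scalarSubstCoeff (f : M⟦X⟧) (m : ℕ) : M := ∑ r ∈ range (m + 1), coeff m (g ^ r) • coeff r f

theorem scalarSubstCoeff_mul (hg : X ∣ g) (f₁ f₂ : M⟦X⟧) (m : ℕ) :
    scalarSubstCoeff g (f₁ * f₂) m =
      ∑ p ∈ antidiagonal m, scalarSubstCoeff g f₁ p.1 * scalarSubstCoeff g f₂ p.2 := by
  set F : ℕ → ℕ → M := fun i j => coeff m (g ^ (i + j)) • (coeff i f₁ * coeff j f₂)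
  have hF : ∀ i j, m < i + j → F i j = 0 := fun i j h => by
    simp only [F, coeff_pow_eq_zero_of_lt hg h, zero_smul]
  have lhs :
      scalarSubstCoeff g (f₁ * f₂) m = ∑ i ∈ range (m + 1), ∑ j ∈ range (m + 1), F i j := by
    calc scalarSubstCoeff g (f₁ * f₂) m
        = ∑ r ∈ range (m + 1), ∑ p ∈ antidiagonal r, F p.1 p.2 := by
          refine sum_congr rfl fun r _ => ?_
          rw [coeff_mul, smul_sum]
          exact sum_congr rfl fun p hp => by rw [← mem_antidiagonal.mp hp]
      _ = ∑ i ∈ range (m + 1), ∑ j ∈ range (m + 1 - i), F i j := by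
          simp only [Nat.sum_antidiagonal_eq_sum_range_succ F, sum_range_diag_flip]
      _ = _ := sum_congr rfl fun i _ => sum_subset (range_subset_range.mpr (by omega))
          fun j _ hj => hF i j (by simp at hj; omega)
  have rhs : ∑ p ∈ antidiagonal m, scalarSubstCoeff g f₁ p.1 * scalarSubstCoeff g f₂ p.2 =
      ∑ i ∈ range (m + 1), ∑ j ∈ range (m + 1), F i j := by
    calc ∑ p ∈ antidiagonal m, scalarSubstCoeff g f₁ p.1 * scalarSubstCoeff g f₂ p.2
        = ∑ p ∈ antidiagonal m, ∑ i ∈ range (m + 1), ∑ j ∈ range (m + 1),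
            (coeff p.1 (g ^ i) * coeff p.2 (g ^ j)) • (coeff i f₁ * coeff j f₂) := by
          refine sum_congr rfl fun p hp => ?_
          have hp := mem_antidiagonal.mp hp
          rw [scalarSubstCoeff, scalarSubstCoeff, sum_coeff_pow_smul_eq_of_le hg _ m (by omega),
            sum_coeff_pow_smul_eq_of_le hg _ m (by omega), sum_mul_sum]
          simp only [smul_mul_smul_comm]
      _ = _ := by
          rw [sum_comm]
          refine sum_congr rfl fun i _ => ?_
          rw [sum_comm]
          simp only [F, ← sum_smul, pow_add, coeff_mul]
  rw [lhs, rhs]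

/-- `f(X) ↦ f(g(X))`. Unlike `PowerSeries.subst`, this needs no commutativity of `M`, since the
coefficients of `g` are central scalars. -/
noncomputable def scalarSubst (hg : X ∣ g) : M⟦X⟧ →+* M⟦X⟧ where
  toFun f := mk (scalarSubstCoeff g f)
  map_one' := by
    ext m
    simp [scalarSubstCoeff, coeff_one]
  map_mul' f₁ f₂ := by
    ext m
    rw [coeff_mk, scalarSubstCoeff_mul hg, coeff_mul]
    simp only [coeff_mk]
  map_zero' := by
    ext m
    simp [scalarSubstCoeff]
  map_add' f₁ f₂ := by
    ext m
    simp [scalarSubstCoeff, smul_add, sum_add_distrib]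

end ScalarSubst

end PowerSeries

section Shift

open PowerSeries

/-- `x / (1 + c x)`: in the variable `x = u⁻¹`, this is `(u + c)⁻¹`. -/
noncomputable def shiftSeries (c : ℚ) : ℚ⟦X⟧ := X * rescale (-c) (invOneSubPow ℚ 1).val

theorem X_dvd_shiftSeries (c : ℚ) : X ∣ shiftSeries c := dvd_mul_right _ _

theorem coeff_invOneSubPow (r k : ℕ) :
    coeff k (invOneSubPow ℚ r).val = ((r + k - 1).choose k : ℚ) := by
  cases r with
  | zero => cases k <;> simp [invOneSubPow_zero, coeff_one]
  | succ d =>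
    rw [invOneSubPow_val_succ_eq_mk_add_choose, coeff_mk, Nat.choose_symm_add,
      Nat.add_right_comm, Nat.add_sub_cancel]

theorem coeff_shiftSeries_pow (c : ℚ) {m r : ℕ} (hr : r ≤ m) :
    coeff m (shiftSeries c ^ r) = (-c) ^ (m - r) * ((m - 1).choose (m - r) : ℚ) := by
  have hpow : (invOneSubPow ℚ 1).val ^ r = (invOneSubPow ℚ r).val := by
    simp [invOneSubPow_eq_inv_one_sub_pow]
  rw [shiftSeries, mul_pow, ← map_pow, hpow, coeff_X_pow_mul', if_pos hr, coeff_rescale,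
    coeff_invOneSubPow, Nat.add_sub_cancel' hr]

variable [Algebra ℚ A]

theorem shPow_eq_scalarSubstCoeff (c : ℚ) (a : ℕ → A) :
    shPow c a = scalarSubstCoeff (shiftSeries c) (mk a) := by
  funext m
  refine Finset.sum_congr rfl fun r hr => ?_
  rw [coeff_shiftSeries_pow c (Nat.lt_succ_iff.mp (Finset.mem_range.mp hr)), coeff_mk,
    Algebra.smul_def]

theorem mk_shPow (c : ℚ) (a : ℕ → A) :
    mk (shPow c a) = scalarSubst (X_dvd_shiftSeries c) (mk a) := by
  rw [shPow_eq_scalarSubstCoeff]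
  rfl

end Shift

section Embedding

open PowerSeries

noncomputable def suHom : A⟦X⟧ →+* KK A :=
  (HahnSeries.ofPowerSeries ℤ (HahnSeries ℤ A)).comp (PowerSeries.map HahnSeries.C)

theorem su_eq_suHom_mk (a : ℕ → A) : su a = suHom (mk a) := by
  simp only [su, suHom, RingHom.comp_apply]
  congr 1

theorem suHom_injective : Function.Injective (suHom : A⟦X⟧ →+* KK A) := by
  intro f₁ f₂ h
  simp only [suHom, RingHom.comp_apply] at h
  exact map_injective _ HahnSeries.C_injective (HahnSeries.ofPowerSeries_injective h)

theorem su_injective : Function.Injective (su : (ℕ → A) → KK A) := fun a b h => by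
  funext n
  have h' : mk a = mk b := suHom_injective (by simpa only [su_eq_suHom_mk] using h)
  rw [← coeff_mk n a, h', coeff_mk]

variable [Algebra ℚ A] in
theorem su_shPow (c : ℚ) (a : ℕ → A) :
    su (shPow c a) = suHom (scalarSubst (X_dvd_shiftSeries c) (mk a)) := by
  rw [su_eq_suHom_mk, mk_shPow]

end Embedding

namespace Matrix

variable {R : Type*} [Ring R]

def lowerUnitriangular (a b c : R) : Matrix (Fin 3) (Fin 3) R := !![1, 0, 0; a, 1, 0; c, b, 1]

def upperUnitriangular (a b c : R) : Matrix (Fin 3) (Fin 3) R := !![1, a, c; 0, 1, b; 0, 0, 1]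

theorem lowerUnitriangular_mul_inv (a b c : R) :
    lowerUnitriangular a b c * lowerUnitriangular (-a) (-b) (b * a - c) = 1 := by
  ext i j
  fin_cases i <;> fin_cases j <;>
    simp [lowerUnitriangular, mul_apply, Fin.sum_univ_three]
  abel

theorem upperUnitriangular_mul_inv (a b c : R) :
    upperUnitriangular a b c * upperUnitriangular (-a) (-b) (a * b - c) = 1 := by
  ext i j
  fin_cases i <;> fin_cases j <;>
    simp [upperUnitriangular, mul_apply, Fin.sum_univ_three]
  abel

theorem lowerUnitriangular_mul_diagonal_mul_upperUnitriangular (f₁ f₂ f₃ e₁ e₂ e₃ : R)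
    (d : Fin 3 → R) :
    lowerUnitriangular f₁ f₂ f₃ * diagonal d * upperUnitriangular e₁ e₂ e₃ =
      !![d 0, d 0 * e₁, d 0 * e₃;
        f₁ * d 0, d 1 + f₁ * d 0 * e₁, d 1 * e₂ + f₁ * d 0 * e₃;
        f₃ * d 0, f₂ * d 1 + f₃ * d 0 * e₁, d 2 + f₂ * d 1 * e₂ + f₃ * d 0 * e₃] := by
  ext i j
  fin_cases i <;> fin_cases j <;>
    simp [lowerUnitriangular, upperUnitriangular, mul_apply, vecMul_diagonal, Fin.sum_univ_three,
      mul_assoc] <;> abel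

theorem eq_gaussInverse_of_mul_eq_one {T S : Matrix (Fin 3) (Fin 3) R}
    {f₁ f₂ f₃ e₁ e₂ e₃ : R} {d d' : Fin 3 → R}
    (hT : T = lowerUnitriangular f₁ f₂ f₃ * diagonal d * upperUnitriangular e₁ e₂ e₃)
    (hd : ∀ i, d i * d' i = 1) (hST : S * T = 1) :
    S = upperUnitriangular (-e₁) (-e₂) (e₁ * e₂ - e₃) * diagonal d' *
      lowerUnitriangular (-f₁) (-f₂) (f₂ * f₁ - f₃) := by
  refine left_inv_eq_right_inv hST ?_
  have hdd' : diagonal d * diagonal d' = 1 := by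
    rw [diagonal_mul_diagonal, ← diagonal_one]
    exact congrArg diagonal (funext hd)
  simp only [hT, Matrix.mul_assoc]
  rw [← Matrix.mul_assoc (upperUnitriangular _ _ _), upperUnitriangular_mul_inv, Matrix.one_mul,
    ← Matrix.mul_assoc (diagonal d), hdd', Matrix.one_mul, lowerUnitriangular_mul_inv]

theorem gaussInverse_lowerRight {T S : Matrix (Fin 3) (Fin 3) R}
    {f₁ f₂ f₃ e₁ e₂ e₃ : R} {d d' : Fin 3 → R}
    (hT : T = lowerUnitriangular f₁ f₂ f₃ * diagonal d * upperUnitriangular e₁ e₂ e₃)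
    (hd : ∀ i, d i * d' i = 1) (hST : S * T = 1) :
    S 1 1 = d' 1 + e₂ * d' 2 * f₂ ∧ S 1 2 = -(e₂ * d' 2) ∧ S 2 1 = -(d' 2 * f₂) ∧
      S 2 2 = d' 2 := by
  rw [eq_gaussInverse_of_mul_eq_one hT hd hST]
  simp [upperUnitriangular, lowerUnitriangular, mul_apply, vecMul_diagonal, Fin.sum_univ_three,
    mul_assoc]

end Matrix

namespace YRso3

open Matrix

variable [Algebra ℚ A] (Y : YRso3 A)

def tMatrix : Matrix (Fin 3) (Fin 3) (KK A) := of fun i j => su (Y.t i j)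

/-- `Tᵗ(u + 1/2)`, where `(Tᵗ)ᵢⱼ = T₋ⱼ,₋ᵢ`. -/
def shiftedTranspose : Matrix (Fin 3) (Fin 3) (KK A) :=
  of fun i j => su (shPow (1 / 2) (Y.t j.rev i.rev))

theorem shiftedTranspose_apply (i j : Fin 3) :
    Y.shiftedTranspose i j = su (shPow (1 / 2) (Y.t j.rev i.rev)) := rfl

theorem shiftedTranspose_mul_tMatrix : Y.shiftedTranspose * Y.tMatrix = 1 := by
  refine Matrix.ext fun i j => ?_
  simpa [shiftedTranspose, tMatrix, mul_apply, one_apply, kd] using Y.unitary₂ i j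

theorem tMatrix_eq_gauss : Y.tMatrix =
    lowerUnitriangular (su Y.f01) (su Y.f10) (su Y.f11) * diagonal ![su Y.km1, su Y.k0, su Y.k1] *
      upperUnitriangular (su Y.e10) (su Y.e01) (su Y.e11) := by
  rw [lowerUnitriangular_mul_diagonal_mul_upperUnitriangular]
  refine Matrix.ext fun i j => ?_
  fin_cases i <;> fin_cases j <;>
    simp [tMatrix, Y.g11, Y.g12, Y.g13, Y.g21, Y.g22, Y.g23, Y.g31, Y.g32, Y.g33]

theorem su_shPow_t_eq_gaussInverse :
    su (shPow (1 / 2) (Y.t 1 1)) = su Y.k0' + su Y.e01 * su Y.k1' * su Y.f10 ∧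
      su (shPow (1 / 2) (Y.t 0 1)) = -(su Y.e01 * su Y.k1') ∧
      su (shPow (1 / 2) (Y.t 1 0)) = -(su Y.k1' * su Y.f10) ∧
      su (shPow (1 / 2) (Y.t 0 0)) = su Y.k1' := by
  have hk : ∀ i, ![su Y.km1, su Y.k0, su Y.k1] i * ![su Y.km1', su Y.k0', su Y.k1'] i = 1 := by
    intro i
    fin_cases i
    exacts [Y.km1_inv₁, Y.k0_inv₁, Y.k1_inv₁]
  simpa [shiftedTranspose_apply] using
    gaussInverse_lowerRight Y.tMatrix_eq_gauss hk Y.shiftedTranspose_mul_tMatrix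

theorem su_shPow_t00 (c : ℚ) : su (shPow c (Y.t 0 0)) = su (shPow c Y.km1) := by
  rw [su_injective Y.g11]

theorem su_shPow_t01 (c : ℚ) :
    su (shPow c (Y.t 0 1)) = su (shPow c Y.km1) * su (shPow c Y.e10) := by
  have h : PowerSeries.mk (Y.t 0 1) = PowerSeries.mk Y.km1 * PowerSeries.mk Y.e10 :=
    suHom_injective (by simpa only [map_mul, ← su_eq_suHom_mk] using Y.g12)
  simp only [su_shPow, h, map_mul]

theorem su_shPow_t10 (c : ℚ) :
    su (shPow c (Y.t 1 0)) = su (shPow c Y.f01) * su (shPow c Y.km1) := by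
  have h : PowerSeries.mk (Y.t 1 0) = PowerSeries.mk Y.f01 * PowerSeries.mk Y.km1 :=
    suHom_injective (by simpa only [map_mul, ← su_eq_suHom_mk] using Y.g21)
  simp only [su_shPow, h, map_mul]

theorem su_shPow_t11 (c : ℚ) : su (shPow c (Y.t 1 1)) =
    su (shPow c Y.k0) + su (shPow c Y.f01) * su (shPow c Y.km1) * su (shPow c Y.e10) := by
  have h : PowerSeries.mk (Y.t 1 1) =
      PowerSeries.mk Y.k0 + PowerSeries.mk Y.f01 * PowerSeries.mk Y.km1 * PowerSeries.mk Y.e10 :=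
    suHom_injective (by simpa only [map_add, map_mul, ← su_eq_suHom_mk] using Y.g22)
  simp only [su_shPow, h, map_add, map_mul]

end YRso3

/-- consequences of unitarity in terms of Gauss generators:
`k₁(u)⁻¹ = k₋₁(u+1/2)`, `-e₀₁(u)k₁(u)⁻¹ = k₋₁(u+1/2)e₋₁,₀(u+1/2)`,
`-k₁(u)⁻¹f₁₀(u) = f₀,₋₁(u+1/2)k₋₁(u+1/2)` and
`k₀(u)⁻¹ + e₀₁(u)k₁(u)⁻¹f₁₀(u) = k₀(u+1/2) + f₀,₋₁(u+1/2)k₋₁(u+1/2)e₋₁,₀(u+1/2)`. -/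
theorem stmt5 (A : Type) [Ring A] [Algebra ℚ A] (Y : YRso3 A) :
    su Y.k1' = su (shPow (1/2) Y.km1) ∧
    -(su Y.e01 * su Y.k1') = su (shPow (1/2) Y.km1) * su (shPow (1/2) Y.e10) ∧
    -(su Y.k1' * su Y.f10) = su (shPow (1/2) Y.f01) * su (shPow (1/2) Y.km1) ∧
    su Y.k0' + su Y.e01 * su Y.k1' * su Y.f10 =
      su (shPow (1/2) Y.k0) +
        su (shPow (1/2) Y.f01) * su (shPow (1/2) Y.km1) * su (shPow (1/2) Y.e10) := by
  obtain ⟨h11, h12, h21, h00⟩ := Y.su_shPow_t_eq_gaussInverse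
  exact ⟨h00.symm.trans (Y.su_shPow_t00 _), h12.symm.trans (Y.su_shPow_t01 _),
    h21.symm.trans (Y.su_shPow_t10 _), h11.symm.trans (Y.su_shPow_t11 _)⟩
end
end

section
/- In Y_R(so_3), the Gauss generators satisfy [k_{-1}(u), k_{-1}(v)] = 0 and [k_{-1}(u), k₀(v)] = 0. -/
noncomputable section

variable {A : Type} [Ring A]

/-! `k₋₁(u) = t₋₁₋₁(u)` and `k₀(u)` is the quasideterminant `t₀₀(u) - t₀₋₁(u) t₋₁₋₁(u)⁻¹ t₋₁₀(u)`.
The RTT relations with `i = j = -1` and `k, l ∈ {-1, 0}` carry no unitarity (`δ`) terms; for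
`k = l = -1` the relation reads `(u-v)(u-v-1/2) X = (u-v-1/2) X` with `X = [t₋₁₋₁(u), t₋₁₋₁(v)]`,
and the other three combine into `(u-v)(u-v-1/2) [t₋₁₋₁(u), k₀(v)] = 0`. Multiplication by
`u - v - c` has no kernel in the series ring, so both commutators vanish. -/

theorem mul_commutator_quasideterminant_eq_zero {S : Type*} [Ring S]
    {D B a b w p q r u₁ u₂ : S} (hD : Commute D (p * w)) (hB : Commute B (p * w))
    (haw : Commute a w) (hbw : b * w = 1) (hwb : w * b = 1)
    (hp : D * (a * p - p * a) = B * (u₂ * b - p * a))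
    (hq : D * (a * q - q * a) = B * (a * q - b * u₁))
    (hr : D * (a * r - r * a) = B * (u₂ * q - p * u₁)) :
    D * (a * (r - p * w * q) - (r - p * w * q) * a) = 0 := by
  have expand : a * (r - p * w * q) - (r - p * w * q) * a =
      (a * r - r * a) - (a * p - p * a) * (w * q) - p * w * (a * q - q * a)
        - p * (a * w - w * a) * q := by noncomm_ring
  have cancel : (u₂ * q - p * u₁) - (u₂ * b - p * a) * (w * q) - p * w * (a * q - b * u₁) = 0 :=
    calc _ = u₂ * (1 - b * w) * q + p * (w * b - 1) * u₁ + p * (a * w - w * a) * q := by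
          noncomm_ring
      _ = 0 := by rw [hbw, hwb, haw.eq]; simp
  rw [expand, haw.eq, sub_self, mul_zero, zero_mul, sub_zero, mul_sub, mul_sub,
    ← mul_assoc D _ (w * q), ← mul_assoc D (p * w), hD.eq, mul_assoc (p * w) D, hp, hq, hr,
    mul_assoc B, ← mul_assoc (p * w) B, ← hB.eq, mul_assoc B, ← mul_sub, ← mul_sub, cancel,
    mul_zero]

namespace HahnSeries

theorem commute_single_s6 {Γ R : Type*} [AddCommGroup Γ] [PartialOrder Γ]
    [IsOrderedCancelAddMonoid Γ] [Ring R] {r : R} (hr : ∀ a, Commute r a) (m : Γ)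
    (x : HahnSeries Γ R) : Commute (single m r) x := by
  ext n
  have hl : (single m r * x).coeff (n - m + m) = r * x.coeff (n - m) := coeff_single_mul_add
  have hr' : (x * single m r).coeff (n - m + m) = x.coeff (n - m) * r := coeff_mul_single_add
  rw [sub_add_cancel] at hl hr'
  rw [hl, hr', (hr _).eq]

/-- Compare coefficients in degree `order X - 1`: there `single (-1) 1 * X` has
`X.coeff X.order ≠ 0` and `C c * X` has `0`. -/
theorem eq_zero_of_single_neg_one_sub_C_mul_eq_zero {R : Type*} [Ring R] (c : R)
    {X : HahnSeries ℤ R} (h : (single (-1) 1 - C c) * X = 0) : X = 0 := by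
  by_contra hX
  rw [sub_mul, sub_eq_zero] at h
  have lhs : (single (-1 : ℤ) (1 : R) * X).coeff (X.order + -1) = X.coeff X.order := by
    rw [coeff_single_mul_add, one_mul]
  have rhs : (C c * X).coeff (X.order + -1) = 0 := by
    rw [C_apply, ← add_zero (X.order + -1), coeff_single_mul_add,
      coeff_eq_zero_of_lt_order (by omega), mul_zero]
  exact hX (coeff_order_eq_zero.mp (lhs.symm.trans (h ▸ rhs)))

end HahnSeries

section SeriesRing

theorem commute_Uu (x : KK A) : Commute Uu x :=
  HahnSeries.commute_single_s6 (fun _ => Commute.one_left _) _ x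

theorem commute_cA {c : A} (hc : ∀ a, Commute c a) (x : KK A) : Commute (cA c) x :=
  HahnSeries.commute_single_s6 (HahnSeries.commute_single_s6 hc 0) 0 x

theorem commute_Vv (x : KK A) : Commute Vv x :=
  HahnSeries.commute_single_s6 (HahnSeries.commute_single_s6 (fun _ => Commute.one_left _) _) 0 x

theorem commute_half [Algebra ℚ A] (x : KK A) : Commute half x :=
  commute_cA (fun a => Algebra.commutes _ a) x

theorem eq_zero_of_Uu_sub_Vv_sub_cA_mul_eq_zero (c : A) {X : KK A}
    (h : (Uu - Vv - cA c) * X = 0) : X = 0 := by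
  refine HahnSeries.eq_zero_of_single_neg_one_sub_C_mul_eq_zero
    (HahnSeries.single (-1) 1 + HahnSeries.C c) ?_
  rwa [map_add, sub_add_eq_sub_sub]

theorem eq_zero_of_Uu_sub_Vv_mul_eq_zero {X : KK A} (h : (Uu - Vv) * X = 0) : X = 0 :=
  eq_zero_of_Uu_sub_Vv_sub_cA_mul_eq_zero 0 (by rwa [cA, map_zero, map_zero, sub_zero])

theorem eq_zero_of_Uu_sub_Vv_sub_one_mul_eq_zero {X : KK A} (h : (Uu - Vv - 1) * X = 0) :
    X = 0 :=
  eq_zero_of_Uu_sub_Vv_sub_cA_mul_eq_zero 1 (by rwa [cA, map_one, map_one])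

theorem eq_zero_of_Uu_sub_Vv_sub_half_mul_eq_zero [Algebra ℚ A] {X : KK A}
    (h : (Uu - Vv - half) * X = 0) : X = 0 :=
  eq_zero_of_Uu_sub_Vv_sub_cA_mul_eq_zero _ h

variable (A) in
def toU : PowerSeries A →+* KK A :=
  (HahnSeries.ofPowerSeries ℤ (HahnSeries ℤ A)).comp (PowerSeries.map HahnSeries.C)

variable (A) in
def toV : PowerSeries A →+* KK A :=
  HahnSeries.C.comp (HahnSeries.ofPowerSeries ℤ A)

theorem su_eq_toU (a : ℕ → A) : su a = toU A (PowerSeries.mk a) := by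
  simp only [su, toU, RingHom.coe_comp, Function.comp_apply]
  congr 1

theorem sv_eq_toV (a : ℕ → A) : sv a = toV A (PowerSeries.mk a) := rfl

theorem toU_injective : Function.Injective (toU A) := by
  intro f g h
  have hmap : PowerSeries.map (HahnSeries.C : A →+* HahnSeries ℤ A) f =
      PowerSeries.map HahnSeries.C g := HahnSeries.ofPowerSeries_injective h
  exact PowerSeries.map_injective _ HahnSeries.C_injective hmap

theorem toV_eq_toV_of_toU_eq {f g : PowerSeries A} (h : toU A f = toU A g) :
    toV A f = toV A g :=
  congrArg _ (toU_injective h)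

end SeriesRing

namespace YRso3

variable [Algebra ℚ A] (Y : YRso3 A)

theorem rtt_zero_zero {k l : Fin 3} (hk : k ≠ 2) (hl : l ≠ 2) :
    (Uu - Vv) * (Uu - Vv - half) *
        (su (Y.t 0 0) * sv (Y.t k l) - sv (Y.t k l) * su (Y.t 0 0)) =
      (Uu - Vv - half) * (su (Y.t k 0) * sv (Y.t 0 l) - sv (Y.t k 0) * su (Y.t 0 l)) := by
  have h := Y.rtt 0 0 k l
  rwa [show (0 : Fin 3).rev = 2 from rfl, kd, kd, if_neg hk, if_neg hl, zero_mul, zero_mul,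
    sub_zero, mul_zero, sub_zero] at h

theorem commute_su_t00_sv_t00 : Commute (su (Y.t 0 0)) (sv (Y.t 0 0)) := by
  have h := Y.rtt_zero_zero (k := 0) (l := 0) (by decide) (by decide)
  have h' : (Uu - Vv - 1) * ((Uu - Vv - half) *
      (su (Y.t 0 0) * sv (Y.t 0 0) - sv (Y.t 0 0) * su (Y.t 0 0))) = 0 := by
    rw [sub_mul, one_mul, ← mul_assoc, h, sub_self]
  exact sub_eq_zero.mp (eq_zero_of_Uu_sub_Vv_sub_half_mul_eq_zero
    (eq_zero_of_Uu_sub_Vv_sub_one_mul_eq_zero h'))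

theorem su_k0_eq : su Y.k0 = su (Y.t 1 1) - su (Y.t 1 0) * su Y.km1' * su (Y.t 0 1) := by
  rw [Y.g22, Y.g21, Y.g12, mul_assoc (su Y.f01 * su Y.km1), ← mul_assoc (su Y.km1'),
    Y.km1_inv₂, one_mul, add_sub_cancel_right]

theorem sv_k0_eq : sv Y.k0 = sv (Y.t 1 1) - sv (Y.t 1 0) * sv Y.km1' * sv (Y.t 0 1) := by
  simp only [sv_eq_toV, ← map_mul, ← map_sub]
  apply toV_eq_toV_of_toU_eq
  simpa only [su_eq_toU, map_mul, map_sub] using Y.su_k0_eq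

theorem sv_t00_eq : sv (Y.t 0 0) = sv Y.km1 := by
  simp only [sv_eq_toV]
  apply toV_eq_toV_of_toU_eq
  simpa only [su_eq_toU] using Y.g11

theorem sv_t00_mul_km1' : sv (Y.t 0 0) * sv Y.km1' = 1 := by
  rw [Y.sv_t00_eq]
  simp only [sv_eq_toV, ← map_mul, ← map_one (toV A)]
  apply toV_eq_toV_of_toU_eq
  simpa only [su_eq_toU, map_mul, map_one] using Y.km1_inv₁

theorem sv_km1'_mul_t00 : sv Y.km1' * sv (Y.t 0 0) = 1 := by
  rw [Y.sv_t00_eq]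
  simp only [sv_eq_toV, ← map_mul, ← map_one (toV A)]
  apply toV_eq_toV_of_toU_eq
  simpa only [su_eq_toU, map_mul, map_one] using Y.km1_inv₂

theorem commute_su_t00_sv_k0 : Commute (su (Y.t 0 0)) (sv Y.k0) := by
  have hB (y : KK A) : Commute (Uu - Vv - half) y :=
    ((commute_Uu y).sub_left (commute_Vv y)).sub_left (commute_half y)
  have hD (y : KK A) : Commute ((Uu - Vv) * (Uu - Vv - half)) y :=
    ((commute_Uu y).sub_left (commute_Vv y)).mul_left (hB y)
  have hw : Commute (su (Y.t 0 0)) (sv Y.km1') :=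
    Commute.units_inv_right (u := ⟨_, _, Y.sv_t00_mul_km1', Y.sv_km1'_mul_t00⟩)
      Y.commute_su_t00_sv_t00
  have h := mul_commutator_quasideterminant_eq_zero (hD _) (hB _) hw Y.sv_t00_mul_km1'
    Y.sv_km1'_mul_t00 (Y.rtt_zero_zero (k := 1) (l := 0) (by decide) (by decide))
    (Y.rtt_zero_zero (k := 0) (l := 1) (by decide) (by decide))
    (Y.rtt_zero_zero (k := 1) (l := 1) (by decide) (by decide))
  rw [mul_assoc] at h
  rw [Y.sv_k0_eq]
  exact sub_eq_zero.mp (eq_zero_of_Uu_sub_Vv_sub_half_mul_eq_zero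
    (eq_zero_of_Uu_sub_Vv_mul_eq_zero h))

end YRso3

/-- `[k₋₁(u), k₋₁(v)] = 0` and `[k₋₁(u), k₀(v)] = 0`. -/
theorem stmt6 (A : Type) [Ring A] [Algebra ℚ A] (Y : YRso3 A) :
    su Y.km1 * sv Y.km1 = sv Y.km1 * su Y.km1 ∧
    su Y.km1 * sv Y.k0 = sv Y.k0 * su Y.km1 := by
  rw [← Y.g11, ← Y.sv_t00_eq]
  exact ⟨Y.commute_su_t00_sv_t00, Y.commute_su_t00_sv_k0⟩
end
end

section
/- In Y_R(so_3), the commutator of the -1-row generators satisfies [t_{-1,0}(u), t_{-1,0}(v)] = t_{-1,-1}(u)t_{-1,1}(v) + (1/(u-v-1))t_{-1,-1}(v)t_{-1,1}(u) - ((u-v)/(u-v-1))t_{-1,1}(v)t_{-1,-1}(u), as an identity of formal series after clearing the denominator u-v-1. -/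
noncomputable section

variable {A : Type} [Ring A]

/-!
The RTT relations for the pairs `(t₋₁,₀, t₋₁,₀)` and `(t₋₁,₋₁, t₋₁,₁)` contain the same
quadratic term `(u - v) ∑ₚ t₋₁,₋ₚ(v) t₋₁,ₚ(u)`. Subtracting them leaves an identity that is a left
multiple of `u - v - 1/2`. This factor commutes with `u - v` and is not a zero divisor, since its
leading term is `u`; cancelling it and rearranging gives the claim.
-/

namespace HahnSeries

theorem isLeftRegular_single_neg_one_sub_C {R : Type} [Ring R] (r : R) :
    IsLeftRegular (single (-1 : ℤ) (1 : R) - C r) := by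
  refine isLeftRegular_of_non_zero_divisor _ fun x hx => ?_
  rw [← coeff_order_eq_zero]
  -- the leading coefficient of `x` survives, shifted down by one, in the product
  simpa only [sub_mul, coeff_sub, coeff_single_mul_add, one_mul, C_mul_eq_smul, coeff_smul,
    coeff_eq_zero_of_lt_order (show x.order + -1 < x.order by omega), smul_zero, sub_zero,
    coeff_zero] using congrArg (coeff · (x.order + -1)) hx

end HahnSeries

theorem sub_one_mul_eq_of_common_term {R : Type} [Ring R] {w a C P Q T S : R}
    (ha : IsLeftRegular a) (hc : Commute a w) (h₁ : w * a * C = a * C + w * S)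
    (h₂ : w * a * (P - Q) = a * (P - T) + w * S) :
    (w - 1) * C = (w - 1) * P + T - w * Q := by
  have h : w * (C - (P - Q)) = C - (P - T) := ha <| show a * _ = a * _ by
    rw [← mul_assoc, hc.eq, mul_sub, h₁, h₂]; noncomm_ring
  rw [← sub_eq_zero, ← sub_eq_zero.mpr h]
  noncomm_ring

section
variable [Algebra ℚ A]

theorem half_eq_algebraMap : (half : KK A) = algebraMap ℚ (KK A) (1 / 2) := by
  rw [HahnSeries.algebraMap_apply, HahnSeries.algebraMap_apply]; rfl

theorem isLeftRegular_Uu_sub_Vv_sub_half : IsLeftRegular (Uu - Vv - half : KK A) := by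
  convert HahnSeries.isLeftRegular_single_neg_one_sub_C
    (HahnSeries.single (-1 : ℤ) 1 + HahnSeries.C (algebraMap ℚ A (1 / 2))) using 1
  rw [map_add, ← sub_sub]; rfl

theorem commute_Uu_sub_Vv_sub_half : Commute (Uu - Vv - half : KK A) (Uu - Vv) :=
  (Commute.refl _).sub_left (half_eq_algebraMap (A := A) ▸ Algebra.commutes _ _)

theorem YRso3.rtt_row_zero (Y : YRso3 A) (j : Fin 3) :
    (Uu - Vv) * (Uu - Vv - half) *
        (su (Y.t 0 j) * sv (Y.t 0 j.rev) - sv (Y.t 0 j.rev) * su (Y.t 0 j)) =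
      (Uu - Vv - half) * (su (Y.t 0 j) * sv (Y.t 0 j.rev) - sv (Y.t 0 j) * su (Y.t 0 j.rev)) +
        (Uu - Vv) * ∑ p : Fin 3, sv (Y.t 0 p.rev) * su (Y.t 0 p) := by
  rw [Y.rtt, kd, kd, if_neg (by decide), if_pos rfl, zero_mul, one_mul, zero_sub,
    mul_neg (Uu - Vv : KK A), sub_neg_eq_add]

end

/-- `(u-v-1)[t₋₁,₀(u), t₋₁,₀(v)] = (u-v-1)t₋₁,₋₁(u)t₋₁,₁(v)
+ t₋₁,₋₁(v)t₋₁,₁(u) - (u-v)t₋₁,₁(v)t₋₁,₋₁(u)`.  (Indices `-1,0,1` are `0,1,2 : Fin 3`.) -/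
theorem stmt19 (A : Type) [Ring A] [Algebra ℚ A] (Y : YRso3 A) :
    (Uu - Vv - 1) * (su (Y.t 0 1) * sv (Y.t 0 1) - sv (Y.t 0 1) * su (Y.t 0 1)) =
      (Uu - Vv - 1) * (su (Y.t 0 0) * sv (Y.t 0 2)) +
        sv (Y.t 0 0) * su (Y.t 0 2) -
        (Uu - Vv) * (sv (Y.t 0 2) * su (Y.t 0 0)) :=
  sub_one_mul_eq_of_common_term isLeftRegular_Uu_sub_Vv_sub_half commute_Uu_sub_Vv_sub_half
    (Y.rtt_row_zero 1) (Y.rtt_row_zero 0)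
end
end
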